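/- arXiv:1509.00653 — 6 statements merged into one kernel-verified Lean document; each statement's English description precedes it below -/
import Mathlib

section
/- Let H be an n×n complex matrix possessing n distinct real eigenvalues λ_1, …, λ_n (i.e., there is an injective function λ : {1,…,n} → ℝ and nonzero vectors φ_1, …, φ_n with Hφ_i = λ_i φ_i for all i). Then H and its conjugate transpose H* are similar: there exists an invertible n×n complex matrix S such that H* = S H S⁻¹. -/
/-!
The matrix `P` whose columns are the eigenvectors is invertible (eigenvectors for distinct
eigenvalues are independent) and `H P = P D` with `D` real diagonal, hence Hermitian. Taking
conjugate transposes gives `Hᴴ = Pᴴ⁻¹ D Pᴴ = Pᴴ⁻¹ P⁻¹ H P Pᴴ`, so `S = (P Pᴴ)⁻¹` works.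
-/

open scoped Matrix

namespace Matrix

variable {m : Type*} [Fintype m] [DecidableEq m]

theorem mul_transpose_of_eq_transpose_of_mul_diagonal {R : Type*} [CommSemiring R]
    {A : Matrix m m R} {μ : m → R} {v : m → m → R} (hv : ∀ i, A *ᵥ v i = μ i • v i) :
    A * (of v)ᵀ = (of v)ᵀ * diagonal μ := by
  ext i j
  rw [mul_diagonal]
  simpa [mul_apply, mulVec, dotProduct, mul_comm] using congrFun (hv j) i

theorem isUnit_transpose_of_eigenvectors_of_injective {K : Type*} [Field K]
    {A : Matrix m m K} {μ : m → K} (hμ : Function.Injective μ) {v : m → m → K}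
    (hv : ∀ i, A *ᵥ v i = μ i • v i) (hv0 : ∀ i, v i ≠ 0) : IsUnit (of v)ᵀ := by
  have hli : LinearIndependent K v :=
    Module.End.eigenvectors_linearIndependent' A.mulVecLin μ hμ v fun i =>
      ⟨Module.End.mem_eigenspace_iff.mpr (hv i), hv0 i⟩
  rw [← linearIndependent_cols_iff_isUnit]
  simpa using hli

theorem conjTranspose_eq_of_mul_eq_mul_of_isHermitian {R : Type*} [CommRing R] [StarRing R]
    {A P D : Matrix m m R} (hP : IsUnit P) (hD : D.IsHermitian) (hAP : A * P = P * D) :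
    Aᴴ = (P * Pᴴ)⁻¹ * A * (P * Pᴴ) := by
  have hPdet : IsUnit P.det := (isUnit_iff_isUnit_det P).mp hP
  have hA : A = P * D * P⁻¹ := by
    rw [← hAP, Matrix.mul_assoc, mul_nonsing_inv P hPdet, Matrix.mul_one]
  have hAH : Aᴴ = Pᴴ⁻¹ * D * Pᴴ := by
    rw [hA, conjTranspose_mul, conjTranspose_mul, hD.eq, conjTranspose_nonsing_inv,
      Matrix.mul_assoc]
  rw [hAH, hA, mul_inv_rev]
  simp only [Matrix.mul_assoc, P.nonsing_inv_mul_cancel_left _ hPdet]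

end Matrix

/-- Let `H` be an `n × n` complex matrix possessing `n` distinct real eigenvalues
`λ 1, …, λ n` (there is an injective `lam : Fin n → ℝ` and nonzero vectors `φ i` with
`H.mulVec (φ i) = lam i • φ i`).  Then `H` and its conjugate transpose `Hᴴ` are similar:
there is an invertible matrix `S` with `Hᴴ = S * H * S⁻¹`. -/
theorem matrix_similar_conjTranspose_of_distinct_real_eigenvalues
    (n : ℕ) (H : Matrix (Fin n) (Fin n) ℂ)
    (lam : Fin n → ℝ) (hlam : Function.Injective lam)
    (φ : Fin n → (Fin n → ℂ)) (hφ : ∀ i, φ i ≠ 0)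
    (heig : ∀ i, H.mulVec (φ i) = (lam i : ℂ) • φ i) :
    ∃ S : Matrix (Fin n) (Fin n) ℂ, IsUnit S ∧ Hᴴ = S * H * S⁻¹ := by
  set P : Matrix (Fin n) (Fin n) ℂ := (Matrix.of φ)ᵀ
  have hP : IsUnit P := Matrix.isUnit_transpose_of_eigenvectors_of_injective
    (Complex.ofReal_injective.comp hlam) heig hφ
  have hD : (Matrix.diagonal fun i => (lam i : ℂ)).IsHermitian :=
    Matrix.isHermitian_diagonal_of_self_adjoint _ (funext fun i => Complex.conj_ofReal _)
  have hPPH : IsUnit (P * Pᴴ) := hP.mul ((Matrix.isUnit_conjTranspose P).mpr hP)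
  refine ⟨(P * Pᴴ)⁻¹, Matrix.isUnit_nonsing_inv_iff.mpr hPPH, ?_⟩
  rw [Matrix.nonsing_inv_nonsing_inv _ ((Matrix.isUnit_iff_isUnit_det _).mp hPPH)]
  exact Matrix.conjTranspose_eq_of_mul_eq_mul_of_isHermitian hP hD
    (Matrix.mul_transpose_of_eq_transpose_of_mul_diagonal heig)
end

section
/- Let R be an associative unital ℝ-algebra containing elements a, a†, b, b† satisfying the Weyl–Heisenberg commutation relations: a a† − a† a = 1, b b† − b† b = 1, and all cross commutators vanish ([a,b] = [a,b†] = [a†,b] = [a†,b†] = 0). Fix γ > 0, set ρ = √(1+γ²) and 𝒩 = (2γρ)^{-1/2}, and define c = 𝒩((−1+ρ) b† + γ a), d = 𝒩((−1+ρ) a† + γ b), d‡ = 𝒩((1+ρ) b† − γ a), c‡ = 𝒩((1+ρ) a† − γ b). Then c, c‡, d, d‡ satisfy the Weyl–Heisenberg commutation relations: [c, c‡] = 1, [d, d‡] = 1, and [c, d] = [c, d‡] = [c‡, d] = [c‡, d‡] = 0. -/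
/-!
The map `(a, a†, b, b†) ↦ (c, c‡, d, d‡)` is a two-mode Bogoliubov transformation
`c = p b† + q a`, `d = p a† + q b`, `c‡ = r a† + s b`, `d‡ = r b† + s a`. By bilinearity of the
commutator, every bracket of the new operators is a combination of the old ones, and the
canonical relations survive as soon as `q r - p s = 1`. For the pseudo-boson coefficients
`q r - p s = 𝒩² γ ((1 + ρ) + (ρ - 1)) = 2 γ ρ 𝒩² = 1`.
-/

-- Mathlib does not make the commutator bracket of an associative ring a global instance.
attribute [local instance] LieRing.ofAssociativeRing

structure IsTwoModeCCR {R : Type*} [Ring R] (a ad b bd : R) : Prop where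
  lie_a_ad : ⁅a, ad⁆ = 1
  lie_b_bd : ⁅b, bd⁆ = 1
  lie_a_b : ⁅a, b⁆ = 0
  lie_a_bd : ⁅a, bd⁆ = 0
  lie_ad_b : ⁅ad, b⁆ = 0
  lie_ad_bd : ⁅ad, bd⁆ = 0

theorem isTwoModeCCR_iff {R : Type*} [Ring R] {a ad b bd : R} :
    IsTwoModeCCR a ad b bd ↔ a * ad - ad * a = 1 ∧ b * bd - bd * b = 1 ∧
      a * b - b * a = 0 ∧ a * bd - bd * a = 0 ∧ ad * b - b * ad = 0 ∧ ad * bd - bd * ad = 0 :=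
  ⟨fun ⟨h₁, h₂, h₃, h₄, h₅, h₆⟩ => ⟨h₁, h₂, h₃, h₄, h₅, h₆⟩,
    fun ⟨h₁, h₂, h₃, h₄, h₅, h₆⟩ => ⟨h₁, h₂, h₃, h₄, h₅, h₆⟩⟩

namespace IsTwoModeCCR

variable {K R : Type*} [CommRing K] [Ring R] [Algebra K R] {a ad b bd : R}

theorem bogoliubov (h : IsTwoModeCCR a ad b bd) {p q r s : K} (hdet : q * r - p * s = 1) :
    IsTwoModeCCR (p • bd + q • a) (r • ad + s • b) (p • ad + q • b) (r • bd + s • a) := by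
  obtain ⟨lie_a_ad, lie_b_bd, lie_a_b, lie_a_bd, lie_ad_b, lie_ad_bd⟩ := h
  have lie_ad_a : ⁅ad, a⁆ = -1 := by rw [← lie_skew, lie_a_ad]
  have lie_bd_b : ⁅bd, b⁆ = -1 := by rw [← lie_skew, lie_b_bd]
  have lie_b_a : ⁅b, a⁆ = 0 := by rw [← lie_skew, lie_a_b, neg_zero]
  have lie_bd_a : ⁅bd, a⁆ = 0 := by rw [← lie_skew, lie_a_bd, neg_zero]
  have lie_b_ad : ⁅b, ad⁆ = 0 := by rw [← lie_skew, lie_ad_b, neg_zero]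
  have lie_bd_ad : ⁅bd, ad⁆ = 0 := by rw [← lie_skew, lie_ad_bd, neg_zero]
  constructor <;> simp only [lie_add, add_lie, LieAlgebra.lie_smul, smul_lie, lie_self, *]
  case lie_a_ad | lie_b_bd => linear_combination (norm := module) hdet • (1 : R)
  all_goals module

end IsTwoModeCCR

/-- The pseudo-boson operators `c, c‡, d, d‡` built from Weyl–Heisenberg bosons
`a, a†, b, b†` satisfy the Weyl–Heisenberg commutation relations:
`[c, c‡] = 1`, `[d, d‡] = 1` and all cross commutators vanish. -/
theorem pseudo_bosons_satisfy_weyl_heisenberg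
    {R : Type*} [Ring R] [Algebra ℝ R]
    (a ad b bd : R)
    (haad : a * ad - ad * a = 1) (hbbd : b * bd - bd * b = 1)
    (hab : a * b - b * a = 0) (habd : a * bd - bd * a = 0)
    (hadb : ad * b - b * ad = 0) (hadbd : ad * bd - bd * ad = 0)
    (γ : ℝ) (hγ : 0 < γ)
    (ρ : ℝ) (hρ : ρ = Real.sqrt (1 + γ ^ 2))
    (N : ℝ) (hN : N = (Real.sqrt (2 * γ * ρ))⁻¹)
    (c d cd dd : R)
    (hc : c = N • ((-1 + ρ) • bd + γ • a))
    (hd : d = N • ((-1 + ρ) • ad + γ • b))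
    (hdd : dd = N • ((1 + ρ) • bd - γ • a))
    (hcd : cd = N • ((1 + ρ) • ad - γ • b)) :
    c * cd - cd * c = 1 ∧ d * dd - dd * d = 1 ∧
      c * d - d * c = 0 ∧ c * dd - dd * c = 0 ∧
      cd * d - d * cd = 0 ∧ cd * dd - dd * cd = 0 := by
  have hρ_pos : 0 < ρ := hρ ▸ Real.sqrt_pos.2 (by positivity)
  have hN_sq : N * N * (2 * γ * ρ) = 1 := by
    rw [hN, ← mul_inv, Real.mul_self_sqrt (by positivity), inv_mul_cancel₀ (by positivity)]
  have hdet : N * γ * (N * (1 + ρ)) - N * (-1 + ρ) * -(N * γ) = 1 := by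
    linear_combination hN_sq
  have hc' : c = (N * (-1 + ρ)) • bd + (N * γ) • a := by rw [hc]; module
  have hd' : d = (N * (-1 + ρ)) • ad + (N * γ) • b := by rw [hd]; module
  have hcd' : cd = (N * (1 + ρ)) • ad + (-(N * γ)) • b := by rw [hcd]; module
  have hdd' : dd = (N * (1 + ρ)) • bd + (-(N * γ)) • a := by rw [hdd]; module
  rw [hc', hd', hcd', hdd']
  exact isTwoModeCCR_iff.1
    ((isTwoModeCCR_iff.2 ⟨haad, hbbd, hab, habd, hadb, hadbd⟩).bogoliubov hdet)
end

section
/- Let V be a complex vector space and let C, C‡, D, D‡ be linear endomorphisms of V satisfying the pseudo-boson Weyl–Heisenberg relations [C, C‡] = 1, [D, D‡] = 1, with all cross commutators vanishing ([C,D] = [C,D‡] = [C‡,D] = [C‡,D‡] = 0). Let β, ρ ∈ ℝ, let H = β(C‡C − D‡D) + ρ(C‡C + DD‡), and suppose ψ₀ ∈ V satisfies Cψ₀ = Dψ₀ = 0. Then for all natural numbers m, n, the vector Ψ_{m,n} = C‡ᵐ D‡ⁿ ψ₀ satisfies H Ψ_{m,n} = (ρ + m(β+ρ) + n(−β+ρ))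 • Ψ_{m,n}. In particular, with ρ = √(1+γ²) the eigenvalues of H are E_{m,n} = √(1+γ²) + m(β+√(1+γ²)) + n(−β+√(1+γ²)). -/
/-!
Since `[C, C‡] = 1`, the number operator `C‡C` satisfies `C‡C · C‡ᵐ = C‡ᵐ (C‡C + m)`, so
`C‡ᵐ` raises its eigenvalue on a vector killed by `C` from `0` to `m`; likewise for `D‡D`.
The cross relations let `C‡C` ignore the `D‡ⁿ` factor and `D‡D` pass through `C‡ᵐ`, so
`Ψ_{m,n}` is a joint eigenvector of `C‡C` and `D‡D` with eigenvalues `m` and `n`, and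
`H = (β + ρ) C‡C + (ρ - β) D‡D + ρ` because `DD‡ = D‡D + 1`.
-/

theorem mul_mul_pow_of_mul_sub_mul_eq_one {R : Type*} [Ring R] {a b : R}
    (h : a * b - b * a = 1) (n : ℕ) : b * a * b ^ n = b ^ n * (b * a + n) := by
  have hab : a * b = b * a + 1 := sub_eq_iff_eq_add'.mp h
  induction n with
  | zero => simp
  | succ n ih =>
    calc b * a * b ^ (n + 1) = b ^ n * (b * a + n) * b := by rw [pow_succ, ← mul_assoc, ih]
      _ = b ^ n * (b * (a * b) + n * b) := by noncomm_ring
      _ = b ^ n * (b * (a * b) + b * n) := by rw [(Nat.cast_commute n b).eq]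
      _ = b ^ (n + 1) * (b * a + (n + 1 : ℕ)) := by
          rw [hab, pow_succ]; push_cast; noncomm_ring

theorem mul_apply_pow_apply_of_mul_sub_mul_eq_one {R M : Type*} [Semiring R]
    [AddCommGroup M] [Module R M] {A Ad : Module.End R M} (h : A * Ad - Ad * A = 1)
    {x : M} (hx : A x = 0) (n : ℕ) :
    (Ad * A) ((Ad ^ n) x) = (n : R) • (Ad ^ n) x := by
  rw [← Module.End.mul_apply, mul_mul_pow_of_mul_sub_mul_eq_one h]
  simp [hx, ← Nat.cast_smul_eq_nsmul R]

theorem pseudo_boson_eigenvectors_of_diagonal_hamiltonian_general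
    {V : Type*} [AddCommGroup V] [Module ℂ V]
    (C Cd D Dd : Module.End ℂ V)
    (hC : C * Cd - Cd * C = 1) (hD : D * Dd - Dd * D = 1)
    (hCDd : C * Dd - Dd * C = 0)
    (hCdD : Cd * D - D * Cd = 0) (hCdDd : Cd * Dd - Dd * Cd = 0)
    (β ρ : ℝ) (H : Module.End ℂ V)
    (hH : H = (β : ℂ) • (Cd * C - Dd * D) + (ρ : ℂ) • (Cd * C + D * Dd))
    (ψ₀ : V) (hCψ : C ψ₀ = 0) (hDψ : D ψ₀ = 0) :
    ∀ m n : ℕ, H ((Cd ^ m) ((Dd ^ n) ψ₀)) =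
      ((ρ + m * (β + ρ) + n * (-β + ρ) : ℝ) : ℂ) • (Cd ^ m) ((Dd ^ n) ψ₀) := by
  intro m n
  have hC_Dd : Commute C Dd := sub_eq_zero.mp hCDd
  have hCd_D : Commute Cd D := sub_eq_zero.mp hCdD
  have hCd_Dd : Commute Cd Dd := sub_eq_zero.mp hCdDd
  have hC_Ddpow : C ((Dd ^ n) ψ₀) = 0 := by
    rw [← Module.End.mul_apply, (hC_Dd.pow_right n).eq,
      Module.End.mul_apply, hCψ, map_zero]
  have hNC := mul_apply_pow_apply_of_mul_sub_mul_eq_one hC hC_Ddpow m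
  have hND : (Dd * D) ((Cd ^ m) ((Dd ^ n) ψ₀)) = (n : ℂ) • (Cd ^ m) ((Dd ^ n) ψ₀) := by
    have hcomm : Commute (Dd * D) (Cd ^ m) := (hCd_Dd.symm.mul_left hCd_D.symm).pow_right m
    rw [← Module.End.mul_apply, hcomm.eq, Module.End.mul_apply,
      mul_apply_pow_apply_of_mul_sub_mul_eq_one hD hDψ n, map_smul]
  rw [hH, sub_eq_iff_eq_add'.mp hD]
  simp only [LinearMap.add_apply, LinearMap.smul_apply, LinearMap.sub_apply,
    Module.End.one_apply, hNC, hND]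
  match_scalars
  ring

/-- The vectors `Ψ_{m,n} = C‡ᵐ D‡ⁿ ψ₀` built from the pseudo-boson vacuum `ψ₀` are
eigenvectors of `H = β(C‡C − D‡D) + ρ(C‡C + DD‡)` with eigenvalues
`ρ + m(β+ρ) + n(−β+ρ)`. -/
theorem pseudo_boson_eigenvectors_of_diagonal_hamiltonian
    {V : Type*} [AddCommGroup V] [Module ℂ V]
    (C Cd D Dd : Module.End ℂ V)
    (hC : C * Cd - Cd * C = 1) (hD : D * Dd - Dd * D = 1)
    (hCD : C * D - D * C = 0) (hCDd : C * Dd - Dd * C = 0)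
    (hCdD : Cd * D - D * Cd = 0) (hCdDd : Cd * Dd - Dd * Cd = 0)
    (β ρ : ℝ) (H : Module.End ℂ V)
    (hH : H = (β : ℂ) • (Cd * C - Dd * D) + (ρ : ℂ) • (Cd * C + D * Dd))
    (ψ₀ : V) (hCψ : C ψ₀ = 0) (hDψ : D ψ₀ = 0) :
    ∀ m n : ℕ, H ((Cd ^ m) ((Dd ^ n) ψ₀)) =
      ((ρ + m * (β + ρ) + n * (-β + ρ) : ℝ) : ℂ) • (Cd ^ m) ((Dd ^ n) ψ₀) :=
  pseudo_boson_eigenvectors_of_diagonal_hamiltonian_general C Cd D Dd hC hD hCDd hCdD hCdDd β ρ H hH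
    ψ₀ hCψ hDψ
end

section
/- Fix γ > 0, set ρ = √(1+γ²) and α = γ/(1+ρ) (equivalently α = (ρ−1)/γ, and 0 < α < 1), and define Ψ₀ : ℝ² → ℝ by Ψ₀(x,y) = exp(−((1+α²)/(1−α²))(x²+y²) − (4α/(1−α²))xy). Then Ψ₀ is annihilated by the pseudo-boson operators c and d: for all (x,y) ∈ ℝ², (ρ−1)·(y·Ψ₀(x,y) − (1/2)·∂Ψ₀/∂y(x,y)) + γ·(x·Ψ₀(x,y) + (1/2)·∂Ψ₀/∂x(x,y)) = 0 and (ρ−1)·(x·Ψ₀(x,y) − (1/2)·∂Ψ₀/∂x(x,y)) + γ·(y·Ψ₀(x,y) + (1/2)·∂Ψ₀/∂y(x,y)) = 0. -/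
/-!
Ψ₀ is the Gaussian `exp (-C (x² + y²) - D x y)`, so each first-order operator sends it to a
linear form in `(x, y)` times Ψ₀. Since `γ α = ρ - 1`, both forms are `γ` times forms whose
coefficients, after clearing the denominator `1 - α² = 2 / (1 + ρ)`, cancel identically in `α`.
-/

open Real

noncomputable def symmetricGaussian (C D x y : ℝ) : ℝ :=
  exp (-C * (x ^ 2 + y ^ 2) - D * (x * y))

namespace symmetricGaussian

variable (C D : ℝ)

theorem comm (x y : ℝ) : symmetricGaussian C D x y = symmetricGaussian C D y x := by
  unfold symmetricGaussian; ring_nf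

theorem hasDerivAt_fst (x y : ℝ) :
    HasDerivAt (fun t => symmetricGaussian C D t y)
      ((-2 * C * x - D * y) * symmetricGaussian C D x y) x := by
  have hsq : HasDerivAt (fun t : ℝ => t ^ 2 + y ^ 2) (2 * x) x := by
    simpa using (hasDerivAt_pow 2 x).add_const (y ^ 2)
  have hexponent : HasDerivAt (fun t => -C * (t ^ 2 + y ^ 2) - D * (t * y))
      (-C * (2 * x) - D * y) x :=
    (hsq.const_mul (-C)).sub ((hasDerivAt_mul_const y).const_mul D)
  unfold symmetricGaussian
  convert hexponent.exp using 1
  ring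

theorem deriv_fst (x y : ℝ) :
    deriv (fun t => symmetricGaussian C D t y) x =
      (-2 * C * x - D * y) * symmetricGaussian C D x y :=
  (hasDerivAt_fst C D x y).deriv

theorem deriv_snd (x y : ℝ) :
    deriv (fun t => symmetricGaussian C D x t) y =
      (-2 * C * y - D * x) * symmetricGaussian C D x y := by
  simp only [comm C D x]
  exact deriv_fst C D y x

end symmetricGaussian

noncomputable def pseudoBosonVacuum (α : ℝ) : ℝ → ℝ → ℝ :=
  symmetricGaussian ((1 + α ^ 2) / (1 - α ^ 2)) (4 * α / (1 - α ^ 2))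

theorem pseudoBosonVacuum_annihilated_fst {α : ℝ} (hα : 1 - α ^ 2 ≠ 0) (x y : ℝ) :
    α * (y * pseudoBosonVacuum α x y - 1 / 2 * deriv (fun t => pseudoBosonVacuum α x t) y)
      + (x * pseudoBosonVacuum α x y + 1 / 2 * deriv (fun t => pseudoBosonVacuum α t y) x)
      = 0 := by
  rw [pseudoBosonVacuum, symmetricGaussian.deriv_fst, symmetricGaussian.deriv_snd]
  field_simp
  ring

theorem pseudoBosonVacuum_annihilated_snd {α : ℝ} (hα : 1 - α ^ 2 ≠ 0) (x y : ℝ) :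
    α * (x * pseudoBosonVacuum α x y - 1 / 2 * deriv (fun t => pseudoBosonVacuum α t y) x)
      + (y * pseudoBosonVacuum α x y + 1 / 2 * deriv (fun t => pseudoBosonVacuum α x t) y)
      = 0 := by
  rw [pseudoBosonVacuum, symmetricGaussian.deriv_fst, symmetricGaussian.deriv_snd]
  field_simp
  ring

theorem sq_div_one_add_sqrt_one_add_sq_lt_one (γ : ℝ) :
    (γ / (1 + √(1 + γ ^ 2))) ^ 2 < 1 := by
  have hs : √(1 + γ ^ 2) ^ 2 = 1 + γ ^ 2 := sq_sqrt (by positivity)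
  have h1 : 1 ≤ √(1 + γ ^ 2) := one_le_sqrt.mpr (by nlinarith)
  rw [div_pow, div_lt_one (by positivity)]
  nlinarith

theorem mul_div_one_add_sqrt_one_add_sq (γ : ℝ) :
    γ * (γ / (1 + √(1 + γ ^ 2))) = √(1 + γ ^ 2) - 1 := by
  have hs : √(1 + γ ^ 2) ^ 2 = 1 + γ ^ 2 := sq_sqrt (by positivity)
  have h1 : 0 ≤ √(1 + γ ^ 2) := sqrt_nonneg _
  field_simp
  nlinarith

theorem vacuum_annihilated_by_pseudo_boson_operators_general
    (γ : ℝ)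
    (ρ α : ℝ) (hρ : ρ = Real.sqrt (1 + γ ^ 2)) (hα : α = γ / (1 + ρ))
    (Ψ₀ : ℝ → ℝ → ℝ)
    (hΨ : ∀ x y : ℝ, Ψ₀ x y =
      Real.exp (-((1 + α ^ 2) / (1 - α ^ 2)) * (x ^ 2 + y ^ 2)
        - (4 * α / (1 - α ^ 2)) * (x * y))) :
    ∀ x y : ℝ,
      (ρ - 1) * (y * Ψ₀ x y - (1 / 2) * deriv (fun t => Ψ₀ x t) y)
        + γ * (x * Ψ₀ x y + (1 / 2) * deriv (fun t => Ψ₀ t y) x) = 0 ∧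
      (ρ - 1) * (x * Ψ₀ x y - (1 / 2) * deriv (fun t => Ψ₀ t y) x)
        + γ * (y * Ψ₀ x y + (1 / 2) * deriv (fun t => Ψ₀ x t) y) = 0 := by
  have hΨ₀ : Ψ₀ = pseudoBosonVacuum α := funext₂ hΨ
  have hγα : ρ - 1 = γ * α := by rw [hα, hρ, mul_div_one_add_sqrt_one_add_sq]
  have hα1 : 1 - α ^ 2 ≠ 0 := by
    rw [hα, hρ]; exact (sub_pos.mpr (sq_div_one_add_sqrt_one_add_sq_lt_one γ)).ne'
  subst hΨ₀
  intro x y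
  rw [hγα]
  exact ⟨by linear_combination γ * pseudoBosonVacuum_annihilated_fst hα1 x y,
    by linear_combination γ * pseudoBosonVacuum_annihilated_snd hα1 x y⟩

/-- The vacuum `Ψ₀(x,y) = exp(−((1+α²)/(1−α²))(x²+y²) − (4α/(1−α²))xy)`, with
`ρ = √(1+γ²)` and `α = γ/(1+ρ)`, is annihilated by the pseudo-boson operators
`c = 𝒩((ρ−1)b* + γa)` and `d = 𝒩((ρ−1)a* + γb)`, i.e. it satisfies the two displayed
first-order PDEs. -/
theorem vacuum_annihilated_by_pseudo_boson_operators
    (γ : ℝ) (hγ : 0 < γ)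
    (ρ α : ℝ) (hρ : ρ = Real.sqrt (1 + γ ^ 2)) (hα : α = γ / (1 + ρ))
    (Ψ₀ : ℝ → ℝ → ℝ)
    (hΨ : ∀ x y : ℝ, Ψ₀ x y =
      Real.exp (-((1 + α ^ 2) / (1 - α ^ 2)) * (x ^ 2 + y ^ 2)
        - (4 * α / (1 - α ^ 2)) * (x * y))) :
    ∀ x y : ℝ,
      (ρ - 1) * (y * Ψ₀ x y - (1 / 2) * deriv (fun t => Ψ₀ x t) y)
        + γ * (x * Ψ₀ x y + (1 / 2) * deriv (fun t => Ψ₀ t y) x) = 0 ∧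
      (ρ - 1) * (x * Ψ₀ x y - (1 / 2) * deriv (fun t => Ψ₀ t y) x)
        + γ * (y * Ψ₀ x y + (1 / 2) * deriv (fun t => Ψ₀ x t) y) = 0 :=
  vacuum_annihilated_by_pseudo_boson_operators_general γ ρ α hρ hα Ψ₀ hΨ
end

section
/- Let R be an associative unital ℝ-algebra containing elements A₊, A₋, A₀ satisfying the su(1,1) commutation relations [A₋, A₊] = A₀, [A₀, A₊] = 2A₊, [A₀, A₋] = −2A₋. Fix γ > 0 and set ρ = √(1+γ²). Define B₊ = (γ/(2ρ))·( ((1+ρ)/γ)·A₊ + (γ/(1+ρ))·A₋ − A₀ ), B₋ = (γ/(2ρ))·( ((−1+ρ)/γ)·A₊ + (γ/(−1+ρ))·A₋ + A₀ ), and B₀ = (1/ρ)·(A₀ + γ(A₊ − A₋)). Then B₊, B₋, B₀ also satisfy the su(1,1) commutation relations: [B₋, B₊] = B₀, [B₀, B₊] = 2B₊, and [B₀, B₋] = −2B₋. -/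
/-!
The commutator is a Lie bracket, so the bracket of two combinations `a A₊ + b A₋ + c A₀` is
again such a combination, with coefficients given by a fixed bilinear formula. With
`p = (1+ρ)/(2ρ)`, `q = (ρ-1)/(2ρ)`, `s = γ/(2ρ)` and `γ² = ρ² - 1` one has
`B₊ = p A₊ + q A₋ - s A₀`, `B₋ = q A₊ + p A₋ + s A₀`, `B₀ = 2s A₊ - 2s A₋ + (p - q) A₀`,
and for triples of this shape the `su(1,1)` relations reduce to `p + q = 1` and `p q = s²`.
-/

structure IsSu11Triple (K : Type*) {L : Type*} [CommRing K] [LieRing L] [LieAlgebra K L]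
    (ap am a0 : L) : Prop where
  lie_am_ap : ⁅am, ap⁆ = a0
  lie_a0_ap : ⁅a0, ap⁆ = (2 : K) • ap
  lie_a0_am : ⁅a0, am⁆ = (-2 : K) • am

namespace IsSu11Triple

variable {K L : Type*} [CommRing K] [LieRing L] [LieAlgebra K L] {ap am a0 : L}

theorem lie_combination (h : IsSu11Triple K ap am a0) (a b c a' b' c' : K) :
    ⁅a • ap + b • am + c • a0, a' • ap + b' • am + c' • a0⁆ =
      (2 * (c * a' - a * c')) • ap + (-2 * (c * b' - b * c')) • am + (b * a' - a * b') • a0 := by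
  have lie_ap_am : ⁅ap, am⁆ = -a0 := by rw [← lie_skew, h.lie_am_ap]
  have lie_ap_a0 : ⁅ap, a0⁆ = -((2 : K) • ap) := by rw [← lie_skew, h.lie_a0_ap]
  have lie_am_a0 : ⁅am, a0⁆ = -((-2 : K) • am) := by rw [← lie_skew, h.lie_a0_am]
  simp only [add_lie, lie_add, smul_lie, lie_smul, lie_self, h.lie_am_ap, h.lie_a0_ap,
    h.lie_a0_am, lie_ap_am, lie_ap_a0, lie_am_a0]
  match_scalars <;> ring

theorem bogoliubov (h : IsSu11Triple K ap am a0) {p q s : K} (hpq : p + q = 1)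
    (hs : p * q = s ^ 2) :
    IsSu11Triple K (p • ap + q • am + (-s) • a0) (q • ap + p • am + s • a0)
      ((2 * s) • ap + (-(2 * s)) • am + (p - q) • a0) where
  lie_am_ap := by
    rw [h.lie_combination]
    match_scalars <;> grind
  lie_a0_ap := by
    rw [h.lie_combination]
    match_scalars <;> grind
  lie_a0_am := by
    rw [h.lie_combination]
    match_scalars <;> grind

end IsSu11Triple

theorem IsSu11Triple.transformed {K L : Type*} [Field K] [CharZero K] [LieRing L]
    [LieAlgebra K L] {ap am a0 : L} (h : IsSu11Triple K ap am a0) {γ ρ : K} (hγ : γ ≠ 0)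
    (hρ_sq : ρ ^ 2 = 1 + γ ^ 2) (hρ : ρ ≠ 0) :
    IsSu11Triple K ((γ / (2 * ρ)) • (((1 + ρ) / γ) • ap + (γ / (1 + ρ)) • am - a0))
      ((γ / (2 * ρ)) • (((-1 + ρ) / γ) • ap + (γ / (-1 + ρ)) • am + a0))
      ((1 / ρ) • (a0 + γ • (ap - am))) := by
  have hρ_add_mul_sub : (1 + ρ) * (-1 + ρ) = γ ^ 2 := by linear_combination hρ_sq
  have hρ_add : 1 + ρ ≠ 0 := left_ne_zero_of_mul (hρ_add_mul_sub ▸ pow_ne_zero 2 hγ)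
  have hρ_sub : -1 + ρ ≠ 0 := right_ne_zero_of_mul (hρ_add_mul_sub ▸ pow_ne_zero 2 hγ)
  have hγ_div_add : γ / (1 + ρ) = (-1 + ρ) / γ := by
    rw [div_eq_div_iff hρ_add hγ]; linear_combination -hρ_add_mul_sub
  have hγ_div_sub : γ / (-1 + ρ) = (1 + ρ) / γ := by
    rw [div_eq_div_iff hρ_sub hγ]; linear_combination -hρ_add_mul_sub
  have hBp : (γ / (2 * ρ)) • (((1 + ρ) / γ) • ap + (γ / (1 + ρ)) • am - a0) =
      ((1 + ρ) / (2 * ρ)) • ap + ((-1 + ρ) / (2 * ρ)) • am + (-(γ / (2 * ρ))) • a0 := by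
    rw [hγ_div_add]
    match_scalars <;> field_simp
  have hBm : (γ / (2 * ρ)) • (((-1 + ρ) / γ) • ap + (γ / (-1 + ρ)) • am + a0) =
      ((-1 + ρ) / (2 * ρ)) • ap + ((1 + ρ) / (2 * ρ)) • am + (γ / (2 * ρ)) • a0 := by
    rw [hγ_div_sub]
    match_scalars <;> field_simp
  have hB0 : (1 / ρ) • (a0 + γ • (ap - am)) = (2 * (γ / (2 * ρ))) • ap
      + (-(2 * (γ / (2 * ρ)))) • am + ((1 + ρ) / (2 * ρ) - (-1 + ρ) / (2 * ρ)) • a0 := by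
    match_scalars <;> field_simp
    ring
  rw [hBp, hBm, hB0]
  exact h.bogoliubov (by field_simp; ring) (by field_simp; linear_combination hρ_sq)

attribute [local instance] LieRing.ofAssociativeRing

theorem isSu11Triple_iff_commutators {K R : Type*} [CommRing K] [Ring R] [Algebra K R]
    (ap am a0 : R) :
    IsSu11Triple K ap am a0 ↔
      am * ap - ap * am = a0 ∧ a0 * ap - ap * a0 = (2 : K) • ap ∧
        a0 * am - am * a0 = (-2 : K) • am := by
  simp only [← Ring.lie_def]
  exact ⟨fun ⟨h₁, h₂, h₃⟩ => ⟨h₁, h₂, h₃⟩, fun ⟨h₁, h₂, h₃⟩ => ⟨h₁, h₂, h₃⟩⟩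

/-- If `A₊, A₋, A₀` satisfy the `su(1,1)` relations `[A₋,A₊] = A₀`, `[A₀,A₊] = 2A₊`,
`[A₀,A₋] = −2A₋`, and `γ > 0`, `ρ = √(1+γ²)`, then the operators
`B₊ = (γ/(2ρ))(((1+ρ)/γ)A₊ + (γ/(1+ρ))A₋ − A₀)`,
`B₋ = (γ/(2ρ))(((−1+ρ)/γ)A₊ + (γ/(−1+ρ))A₋ + A₀)` and
`B₀ = (1/ρ)(A₀ + γ(A₊ − A₋))` also satisfy the `su(1,1)` commutation relations. -/
theorem transformed_su11_generators_satisfy_relations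
    {R : Type*} [Ring R] [Algebra ℝ R]
    (Ap Am A0 : R)
    (h1 : Am * Ap - Ap * Am = A0)
    (h2 : A0 * Ap - Ap * A0 = (2 : ℝ) • Ap)
    (h3 : A0 * Am - Am * A0 = (-2 : ℝ) • Am)
    (γ : ℝ) (hγ : 0 < γ) (ρ : ℝ) (hρ : ρ = Real.sqrt (1 + γ ^ 2))
    (Bp Bm B0 : R)
    (hBp : Bp = (γ / (2 * ρ)) • (((1 + ρ) / γ) • Ap + (γ / (1 + ρ)) • Am - A0))
    (hBm : Bm = (γ / (2 * ρ)) • (((-1 + ρ) / γ) • Ap + (γ / (-1 + ρ)) • Am + A0))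
    (hB0 : B0 = (1 / ρ) • (A0 + γ • (Ap - Am))) :
    Bm * Bp - Bp * Bm = B0 ∧
      B0 * Bp - Bp * B0 = (2 : ℝ) • Bp ∧
      B0 * Bm - Bm * B0 = (-2 : ℝ) • Bm := by
  have hρ_sq : ρ ^ 2 = 1 + γ ^ 2 := by rw [hρ, Real.sq_sqrt (by positivity)]
  have hρ_pos : 0 < ρ := hρ ▸ Real.sqrt_pos.2 (by positivity)
  have hA := (isSu11Triple_iff_commutators Ap Am A0).2 ⟨h1, h2, h3⟩
  subst hBp hBm hB0
  exact (isSu11Triple_iff_commutators _ _ _).1 (hA.transformed hγ.ne' hρ_sq hρ_pos.ne')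
end

section
/- Fix a natural number κ and γ > 0; set ρ = √(1+γ²) and α = (ρ−1)/γ. Define the sequence ψ : ℕ → ℝ by ψ_n = (−α)ⁿ · √(binom(κ+n, n)), where binom denotes the binomial coefficient. Then ψ is annihilated by the lowering operator B₋, i.e., for every n ∈ ℕ: α·√(n(κ+n))·ψ_{n−1} + (1/α)·√((n+1)(κ+n+1))·ψ_{n+1} + (κ+2n+1)·ψ_n = 0, where for n = 0 the first term vanishes (its coefficient √(0·κ) is 0). -/
/-! With `cₙ = √(binom(κ+n, n))`, the absorption identity `(κ+n+1) binom(κ+n, n) = (n+1) binom(κ+n+1, n+1)`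
gives `√((n+1)(κ+n+1)) cₙ = (n+1) cₙ₊₁` and `√((n+1)(κ+n+1)) cₙ₊₁ = (κ+n+1) cₙ`. Substituting,
the three terms of the recurrence at `n + 1` become `α (-α)ⁿ cₙ₊₁` times `(n+1)`, `(κ+n+2)` and
`-(κ+2n+3)`, which cancel; at `n = 0` the two remaining terms are `∓(κ+1)`. -/

lemma Real.sqrt_mul_mul_sqrt_of_mul_eq {a b c d : ℝ} (ha : 0 ≤ a) (hb : 0 ≤ b)
    (h : b * c = a * d) : √(a * b) * √c = a * √d := by
  rw [← Real.sqrt_mul (mul_nonneg ha hb), mul_assoc, h, ← mul_assoc,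
    Real.sqrt_mul (mul_self_nonneg a), Real.sqrt_mul_self ha]

lemma Nat.cast_add_one_mul_choose_eq (k n : ℕ) :
    ((k : ℝ) + 1) * (k.choose n : ℝ) = ((k + 1).choose (n + 1) : ℝ) * ((n : ℝ) + 1) := by
  exact_mod_cast Nat.add_one_mul_choose_eq k n

lemma sqrt_mul_sqrt_choose (κ n : ℕ) :
    √(((n : ℝ) + 1) * ((κ : ℝ) + n + 1)) * √((κ + n).choose n)
      = ((n : ℝ) + 1) * √((κ + (n + 1)).choose (n + 1)) := by
  refine Real.sqrt_mul_mul_sqrt_of_mul_eq (by positivity) (by positivity) ?_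
  rw [← add_assoc]
  have := Nat.cast_add_one_mul_choose_eq (κ + n) n
  push_cast at this
  linarith

lemma sqrt_mul_sqrt_choose_succ (κ n : ℕ) :
    √(((n : ℝ) + 1) * ((κ : ℝ) + n + 1)) * √((κ + (n + 1)).choose (n + 1))
      = ((κ : ℝ) + n + 1) * √((κ + n).choose n) := by
  rw [mul_comm ((n : ℝ) + 1)]
  refine Real.sqrt_mul_mul_sqrt_of_mul_eq (by positivity) (by positivity) ?_
  rw [← add_assoc]
  have := Nat.cast_add_one_mul_choose_eq (κ + n) n
  push_cast at this
  linarith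

noncomputable def lowestWeight (κ : ℕ) (α : ℝ) (n : ℕ) : ℝ :=
  (-α) ^ n * √((κ + n).choose n)

lemma lowestWeight_lowering (κ : ℕ) {α : ℝ} (hα : α ≠ 0) (n : ℕ) :
    α * √((n : ℝ) * ((κ : ℝ) + n)) * lowestWeight κ α (n - 1)
      + (1 / α) * √(((n : ℝ) + 1) * ((κ : ℝ) + n + 1)) * lowestWeight κ α (n + 1)
      + ((κ : ℝ) + 2 * n + 1) * lowestWeight κ α n = 0 := by
  have hinv : α⁻¹ * α = 1 := inv_mul_cancel₀ hα
  cases n with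
  | zero =>
    have h := sqrt_mul_sqrt_choose_succ κ 0
    simp only [lowestWeight, Nat.cast_zero, zero_mul, Real.sqrt_zero, mul_zero,
      zero_add] at h ⊢
    linear_combination (-α⁻¹ * α) * h - ((κ : ℝ) + 1) * √((κ + 0).choose 0) * hinv
  | succ m =>
    have hm := sqrt_mul_sqrt_choose κ m
    have hm1 := sqrt_mul_sqrt_choose_succ κ (m + 1)
    have hradicand : ((m + 1 : ℕ) : ℝ) * (κ + (m + 1 : ℕ)) = (m + 1) * (κ + m + 1) := by
      push_cast; ring
    simp only [lowestWeight, Nat.add_sub_cancel, hradicand]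
    push_cast at hm1 ⊢
    linear_combination α * (-α) ^ m * hm + (1 / α) * (-α) ^ (m + 2) * hm1
      + ((κ : ℝ) + m + 2) * √((κ + (m + 1)).choose (m + 1)) * α * (-α) ^ m * hinv

/-- The sequence `ψₙ = (−α)ⁿ √(binom(κ+n, n))`, with `ρ = √(1+γ²)` and `α = (ρ−1)/γ`,
is annihilated by the lowering operator `B₋`: for every `n`,
`α√(n(κ+n)) ψ_{n−1} + (1/α)√((n+1)(κ+n+1)) ψ_{n+1} + (κ+2n+1) ψₙ = 0`
(for `n = 0` the first term vanishes since its coefficient `√(0·κ)` is `0`). -/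
theorem lowest_weight_vector_annihilated_by_lowering
    (κ : ℕ) (γ : ℝ) (hγ : 0 < γ)
    (ρ α : ℝ) (hρ : ρ = Real.sqrt (1 + γ ^ 2)) (hα : α = (ρ - 1) / γ)
    (ψ : ℕ → ℝ)
    (hψ : ∀ n : ℕ, ψ n = (-α) ^ n * Real.sqrt ((κ + n).choose n)) :
    ∀ n : ℕ,
      α * Real.sqrt ((n : ℝ) * ((κ : ℝ) + n)) * ψ (n - 1)
        + (1 / α) * Real.sqrt (((n : ℝ) + 1) * ((κ : ℝ) + n + 1)) * ψ (n + 1)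
        + ((κ : ℝ) + 2 * n + 1) * ψ n = 0 := by
  have hρ_gt_one : 1 < ρ := by
    rw [hρ, Real.lt_sqrt zero_le_one]
    nlinarith
  have hα_ne : α ≠ 0 := by
    rw [hα]
    exact (div_pos (sub_pos.mpr hρ_gt_one) hγ).ne'
  obtain rfl : ψ = lowestWeight κ α := funext hψ
  exact lowestWeight_lowering κ hα_ne
end
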